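/- arXiv:1907.03251 — 2 statements merged into one kernel-verified Lean document; each statement's English description precedes it below -/
import Mathlib

section
/- Let n be a natural number. For n-bit integers u, v, w, the equality u ⊕ v ⊕ w = −u + v + w holds in the integers if and only if for every position i with 0 ≤ i ≤ n − 1 the triple of bits (u_i, v_i, w_i) is one of (0,0,0), (0,0,1), (0,1,0), (1,0,1), (1,1,0), (1,1,1); moreover, the number of triples (u, v, w) of n-bit integers satisfying u ⊕ v ⊕ w = −u + v + w equals 6^n (out of 8^n triples in total). -/
/-!
Write `x = u ⊕ v ⊕ w`, so that the equation reads `u + x = v + w`. Splitting a sum into its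
carry-free part and its carries, `a + b = (a ⊕ b) + 2 (a ∧ b)`, and since `u ⊕ x = v ⊕ w` the
equation is equivalent to `u ∧ x = v ∧ w`: a bitwise condition, satisfied at a position by exactly
the six listed bit triples. Being bitwise, it is counted independently at each of the `n`
positions, giving `6 ^ n`.
-/

open Finset

namespace Nat

theorem add_eq_xor_add_two_mul_and (a b : ℕ) : a + b = (a ^^^ b) + 2 * (a &&& b) := by
  induction a using Nat.binaryRec generalizing b with
  | zero => simp
  | bit x a ih =>
    cases b using Nat.bitCasesOn with
    | bit y b =>
      rw [xor_bit, land_bit]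
      simp only [bit_val]
      have ih := ih b
      cases x <;> cases y <;> simp <;> omega

theorem testBit_bit_add_one (b : Bool) (n i : ℕ) : (bit b n).testBit (i + 1) = n.testBit i := by
  rw [testBit_add_one, bit_div_two]

end Nat

theorem xor_three_eq_neg_add_add_iff (u v w : ℕ) :
    ((u ^^^ v ^^^ w : ℕ) : ℤ) = -u + v + w ↔ u &&& (u ^^^ v ^^^ w) = v &&& w := by
  have hxor : u ^^^ (u ^^^ v ^^^ w) = v ^^^ w := by
    rw [Nat.xor_assoc, ← Nat.xor_assoc u u, Nat.xor_self, Nat.zero_xor]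
  have hu := Nat.add_eq_xor_add_two_mul_and u (u ^^^ v ^^^ w)
  have hv := Nat.add_eq_xor_add_two_mul_and v w
  rw [hxor] at hu
  omega

theorem and_xor_three_eq_and_iff (u v w : ℕ) :
    u &&& (u ^^^ v ^^^ w) = v &&& w ↔
      ∀ i, (u.testBit i && (u.testBit i ^^ v.testBit i ^^ w.testBit i)) =
        (v.testBit i && w.testBit i) := by
  simp only [Nat.eq_iff_testBit_eq, Nat.testBit_land, Nat.testBit_xor]

theorem forall_testBit_iff_forall_lt_of_lt_two_pow (p : Bool × Bool × Bool → Prop)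
    (h0 : p (false, false, false)) {n u v w : ℕ}
    (hu : u < 2 ^ n) (hv : v < 2 ^ n) (hw : w < 2 ^ n) :
    (∀ i, p (u.testBit i, v.testBit i, w.testBit i)) ↔
      ∀ i < n, p (u.testBit i, v.testBit i, w.testBit i) := by
  refine ⟨fun h i _ => h i, fun h i => ?_⟩
  by_cases hi : i < n
  · exact h i hi
  · have hle : 2 ^ n ≤ 2 ^ i := Nat.pow_le_pow_right two_pos (not_lt.1 hi)
    simpa only [Nat.testBit_eq_false_of_lt (hu.trans_le hle),
      Nat.testBit_eq_false_of_lt (hv.trans_le hle), Nat.testBit_eq_false_of_lt (hw.trans_le hle)]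
      using h0

theorem card_filter_forall_testBit (p : Bool × Bool × Bool → Prop) [DecidablePred p] (n : ℕ) :
    #{t ∈ range (2 ^ n) ×ˢ range (2 ^ n) ×ˢ range (2 ^ n) |
      ∀ i < n, p (t.1.testBit i, t.2.1.testBit i, t.2.2.testBit i)} = #{x | p x} ^ n := by
  induction n with
  | zero => simp
  | succ n ih =>
    rw [pow_succ' #{x | p x}, ← ih, ← card_product]
    have hdiv : ∀ m : ℕ, m < 2 ^ (n + 1) → m / 2 < 2 ^ n := fun m hm => by
      rw [pow_succ] at hm; omega
    refine card_nbij'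
      (fun t => ((t.1.testBit 0, t.2.1.testBit 0, t.2.2.testBit 0),
        (t.1 / 2, t.2.1 / 2, t.2.2 / 2)))
      (fun s => (Nat.bit s.1.1 s.2.1, Nat.bit s.1.2.1 s.2.2.1, Nat.bit s.1.2.2 s.2.2.2))
      ?_ ?_ ?_ ?_
    · rintro ⟨u, v, w⟩ ht
      simp only [coe_filter, coe_product, mem_product, mem_univ, true_and, mem_range,
        Set.mem_prod, Set.mem_ofPred_eq, Nat.forall_lt_succ_left, Nat.testBit_add_one] at ht ⊢
      exact ⟨ht.2.1, ⟨hdiv u ht.1.1, hdiv v ht.1.2.1, hdiv w ht.1.2.2⟩, ht.2.2⟩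
    · rintro ⟨⟨a, b, c⟩, u, v, w⟩ ht
      simp only [coe_filter, coe_product, mem_product, mem_univ, true_and, mem_range,
        Set.mem_prod, Set.mem_ofPred_eq, Nat.forall_lt_succ_left,
        Nat.bit_lt_two_pow_succ_iff, Nat.testBit_bit_zero, Nat.testBit_bit_add_one] at ht ⊢
      exact ⟨ht.2.1, ht.1, ht.2.2⟩
    · rintro ⟨u, v, w⟩ -
      simp only [← Nat.shiftRight_one, Nat.bit_testBit_zero_shiftRight_one]
    · rintro ⟨⟨a, b, c⟩, u, v, w⟩ -
      simp only [Nat.testBit_bit_zero, Nat.bit_div_two]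

theorem and_xor_three_eq_and_iff_mem (a b c : Bool) :
    (a && (a ^^ b ^^ c)) = (b && c) ↔ (a, b, c) ∈
      ({(false, false, false), (false, false, true), (false, true, false),
        (true, false, true), (true, true, false), (true, true, true)} :
        Set (Bool × Bool × Bool)) := by
  cases a <;> cases b <;> cases c <;> simp

/-- For `n`-bit integers `u, v, w`, the equality `u ^^^ v ^^^ w = -u + v + w` (in `ℤ`)
holds iff for each `i < n` the bit triple `(u_i, v_i, w_i)` is one of
`(0,0,0), (0,0,1), (0,1,0), (1,0,1), (1,1,0), (1,1,1)`; there are `6^n` such triples. -/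
theorem xor_three_eq_neg_add_add_iff_and_card (n : ℕ) :
    (∀ u v w : ℕ, u < 2 ^ n → v < 2 ^ n → w < 2 ^ n →
      (((u ^^^ v ^^^ w : ℕ) : ℤ) = -(u : ℤ) + (v : ℤ) + (w : ℤ) ↔
        ∀ i < n, (u.testBit i, v.testBit i, w.testBit i) ∈
          ({(false, false, false), (false, false, true), (false, true, false),
            (true, false, true), (true, true, false), (true, true, true)} :
            Set (Bool × Bool × Bool)))) ∧
    ((Finset.range (2 ^ n) ×ˢ Finset.range (2 ^ n) ×ˢ Finset.range (2 ^ n)).filter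
      (fun t : ℕ × ℕ × ℕ =>
        ((t.1 ^^^ t.2.1 ^^^ t.2.2 : ℕ) : ℤ) = -(t.1 : ℤ) + (t.2.1 : ℤ) + (t.2.2 : ℤ))).card
      = 6 ^ n := by
  let p : Bool × Bool × Bool → Prop := fun x => (x.1 && (x.1 ^^ x.2.1 ^^ x.2.2)) = (x.2.1 && x.2.2)
  have hbits : ∀ u v w : ℕ, u < 2 ^ n → v < 2 ^ n → w < 2 ^ n →
      (((u ^^^ v ^^^ w : ℕ) : ℤ) = -u + v + w ↔
        ∀ i < n, p (u.testBit i, v.testBit i, w.testBit i)) :=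
    fun u v w hu hv hw => by
      rw [xor_three_eq_neg_add_add_iff, and_xor_three_eq_and_iff,
        ← forall_testBit_iff_forall_lt_of_lt_two_pow p rfl hu hv hw]
  refine ⟨fun u v w hu hv hw => ?_, ?_⟩
  · simpa only [p, and_xor_three_eq_and_iff_mem] using hbits u v w hu hv hw
  · rw [filter_congr fun t ht => by
      simp only [mem_product, mem_range] at ht
      exact hbits t.1 t.2.1 t.2.2 ht.1 ht.2.1 ht.2.2,
      card_filter_forall_testBit p n, show #{x | p x} = 6 by decide]
end

section
/- Let n ≥ 1 be a natural number. The number of quadruples (u, v, w, s) of n-bit integers such that, setting t := u ⊕ v ⊕ w, both congruences u ⊕ v ⊕ w ≡ −u + v + w (mod 2^n) and w ⊕ s ⊕ t ≡ −w + s + t (mod 2^n) hold (congruences in the integers), equals 16 · 10^(n−1). Equivalently, for independent uniformly random n-bit integers u, v, w, s, both events hold with probability (5/8)^(n−1). -/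
/-!
Since `x + y = (x ⊕ y) + 2 (x ∧ y)`, both `b + c` and `(a ⊕ b ⊕ c) + a` equal `(b ⊕ c)` plus twice
their carry word, so `a ⊕ b ⊕ c ≡ -a + b + c (mod 2^n)` says exactly that the two carry words
`b ∧ c` and `(a ⊕ b ⊕ c) ∧ a` agree in their lowest `n - 1` bits. The two congruences thus become
independent conditions on the bit columns `(uᵢ, vᵢ, wᵢ, sᵢ)` for `i < n - 1`, each satisfied by
10 of the 16 columns, while the top column is free: `16 · 10^(n-1)` quadruples.
-/

theorem Nat.add_eq_xor_add_two_mul_and_s13 (a b : ℕ) : a + b = (a ^^^ b) + 2 * (a &&& b) := by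
  induction a using Nat.binaryRec generalizing b with
  | zero => simp
  | bit i x ih =>
    induction b using Nat.binaryRec with
    | zero => simp
    | bit j y _ =>
      rw [Nat.xor_bit, Nat.land_bit, Nat.bit_val, Nat.bit_val, Nat.bit_val, Nat.bit_val]
      have h := ih y
      cases i <;> cases j <;> simp [Bool.toNat] <;> omega

theorem Nat.modEq_two_pow_iff_testBit (k x y : ℕ) :
    x ≡ y [MOD 2 ^ k] ↔ ∀ i < k, x.testBit i = y.testBit i := by
  refine ⟨fun h i hi => ?_, fun h => Nat.eq_of_testBit_eq fun i => ?_⟩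
  · simpa [Nat.testBit_mod_two_pow, hi] using congrArg (Nat.testBit · i) h
  · by_cases hik : i < k <;> simp [Nat.testBit_mod_two_pow, hik, h]

theorem neg_add_add_sub_xor (a b c : ℕ) :
    (-(a : ℤ) + b + c) - ((a ^^^ b ^^^ c : ℕ) : ℤ)
      = 2 * (((b &&& c : ℕ) : ℤ) - (((a ^^^ b ^^^ c) &&& a : ℕ) : ℤ)) := by
  have hbc := Nat.add_eq_xor_add_two_mul_and_s13 b c
  have hta := Nat.add_eq_xor_add_two_mul_and_s13 (a ^^^ b ^^^ c) a
  rw [show (a ^^^ b ^^^ c) ^^^ a = b ^^^ c by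
    rw [Nat.xor_comm, ← Nat.xor_assoc, ← Nat.xor_assoc, Nat.xor_self, Nat.zero_xor]] at hta
  have := congrArg (Nat.cast : ℕ → ℤ) hbc
  have := congrArg (Nat.cast : ℕ → ℤ) hta
  push_cast at *
  linarith

/-- The carries of `b + c` and of `(a ⊕ b ⊕ c) + a` agree. -/
def NegAddAddBit (a b c : Bool) : Prop :=
  (b && c) = ((a ^^ b ^^ c) && a)

instance (a b c : Bool) : Decidable (NegAddAddBit a b c) :=
  inferInstanceAs (Decidable (_ = _))

theorem xor_xor_modEq_neg_add_add_iff (m a b c : ℕ) :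
    ((a ^^^ b ^^^ c : ℕ) : ℤ) ≡ -(a : ℤ) + b + c [ZMOD (2 ^ (m + 1) : ℕ)] ↔
      ∀ i < m, NegAddAddBit (a.testBit i) (b.testBit i) (c.testBit i) := by
  rw [Int.modEq_iff_dvd, neg_add_add_sub_xor, Nat.cast_pow, pow_succ', Nat.cast_ofNat,
    mul_dvd_mul_iff_left two_ne_zero, ← Nat.cast_two, ← Nat.cast_pow, ← Nat.modEq_iff_dvd,
    Nat.modEq_two_pow_iff_testBit]
  simp only [NegAddAddBit, Nat.testBit_land, Nat.testBit_xor]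
  exact forall₂_congr fun i _ => eq_comm

open Finset

def bitsEquiv (n : ℕ) : Fin (2 ^ n) ≃ (Fin n → Bool) :=
  finFunctionFinEquiv.symm.trans (Equiv.arrowCongr (Equiv.refl _) finTwoEquiv)

theorem bitsEquiv_apply {n : ℕ} (x : Fin (2 ^ n)) (i : Fin n) :
    bitsEquiv n x i = (x : ℕ).testBit i := by
  show finTwoEquiv (finFunctionFinEquiv.symm x i) = _
  rw [Nat.testBit_eq_decide_div_mod_eq, ← finFunctionFinEquiv_symm_apply_val]
  generalize finFunctionFinEquiv.symm x i = b
  revert b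
  decide

theorem testBit_bitsEquiv_symm {n : ℕ} (f : Fin n → Bool) (i : Fin n) :
    ((bitsEquiv n).symm f : ℕ).testBit i = f i := by
  rw [← bitsEquiv_apply, Equiv.apply_symm_apply]

theorem bitsEquiv_symm_testBit {n x : ℕ} (hx : x < 2 ^ n) :
    ((bitsEquiv n).symm fun i => x.testBit i : ℕ) = x := by
  simp_rw [show (fun i : Fin n => x.testBit i) = bitsEquiv n ⟨x, hx⟩ from
    funext fun i => (bitsEquiv_apply ⟨x, hx⟩ i).symm, Equiv.symm_apply_apply]

def quadBits (a : ℕ × ℕ × ℕ × ℕ) (i : ℕ) : Bool × Bool × Bool × Bool :=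
  (a.1.testBit i, a.2.1.testBit i, a.2.2.1.testBit i, a.2.2.2.testBit i)

theorem card_filter_quadBits (n : ℕ) (P : ℕ → Bool × Bool × Bool × Bool → Prop)
    [∀ i, DecidablePred (P i)] :
    #{a ∈ range (2 ^ n) ×ˢ range (2 ^ n) ×ˢ range (2 ^ n) ×ˢ range (2 ^ n) |
      ∀ i < n, P i (quadBits a i)} = ∏ i ∈ range n, #{b | P i b} := by
  let ofBits (f : Fin n → Bool) : ℕ := (bitsEquiv n).symm f
  rw [← Fin.prod_univ_eq_prod_range (fun i => #{b | P i b}), ← Fintype.card_piFinset]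
  refine card_bij' (fun a _ i => quadBits a i)
    (fun g _ => (ofBits fun i => (g i).1, ofBits fun i => (g i).2.1,
      ofBits fun i => (g i).2.2.1, ofBits fun i => (g i).2.2.2)) ?_ ?_ ?_ ?_
  · intro a ha
    simp only [mem_filter, Fintype.mem_piFinset, mem_univ, true_and] at ha ⊢
    exact fun i => ha.2 i i.isLt
  · intro g hg
    simp only [mem_filter, Fintype.mem_piFinset, mem_univ, true_and, mem_product, mem_range] at hg ⊢
    refine ⟨⟨Fin.isLt _, Fin.isLt _, Fin.isLt _, Fin.isLt _⟩, fun i hi => ?_⟩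
    simpa [quadBits, ofBits, testBit_bitsEquiv_symm _ ⟨i, hi⟩] using hg ⟨i, hi⟩
  · rintro ⟨u, v, w, s⟩ ha
    simp only [mem_filter, mem_product, mem_range] at ha
    obtain ⟨⟨hu, hv, hw, hs⟩, -⟩ := ha
    simp only [quadBits, ofBits, bitsEquiv_symm_testBit, hu, hv, hw, hs]
  · intro g _
    funext i
    simp [quadBits, ofBits, testBit_bitsEquiv_symm]

def QuadNegAddAddBit (b : Bool × Bool × Bool × Bool) : Prop :=
  NegAddAddBit b.1 b.2.1 b.2.2.1 ∧ NegAddAddBit b.2.2.1 b.2.2.2 (b.1 ^^ b.2.1 ^^ b.2.2.1)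

instance : DecidablePred QuadNegAddAddBit :=
  fun _ => inferInstanceAs (Decidable (_ ∧ _))

theorem card_quadNegAddAddBit : #{b | QuadNegAddAddBit b} = 10 := by
  decide

theorem quad_modEq_neg_add_add_iff (m u v w s : ℕ) :
    (((u ^^^ v ^^^ w : ℕ) : ℤ) ≡ -(u : ℤ) + v + w [ZMOD (2 ^ (m + 1) : ℕ)] ∧
      ((w ^^^ s ^^^ (u ^^^ v ^^^ w) : ℕ) : ℤ) ≡
        -(w : ℤ) + s + (u ^^^ v ^^^ w : ℕ) [ZMOD (2 ^ (m + 1) : ℕ)]) ↔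
      ∀ i < m, QuadNegAddAddBit (quadBits (u, v, w, s) i) := by
  simp only [xor_xor_modEq_neg_add_add_iff, QuadNegAddAddBit, quadBits, Nat.testBit_xor,
    ← forall₂_and]

open scoped Classical in
/-- For `n ≥ 1`, the number of quadruples `(u, v, w, s)` of `n`-bit integers such that,
with `t := u ^^^ v ^^^ w`, both `u ^^^ v ^^^ w ≡ -u + v + w [ZMOD 2^n]` and
`w ^^^ s ^^^ t ≡ -w + s + t [ZMOD 2^n]` hold, is `16 * 10^(n-1)`; equivalently, the
probability over uniform quadruples is `(5/8)^(n-1)`. -/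
theorem card_quadruples_neg_add_add (n : ℕ) (hn : 1 ≤ n) :
    let N := ((Finset.range (2 ^ n) ×ˢ Finset.range (2 ^ n) ×ˢ
        Finset.range (2 ^ n) ×ˢ Finset.range (2 ^ n)).filter
      (fun a : ℕ × ℕ × ℕ × ℕ =>
        let u := a.1; let v := a.2.1; let w := a.2.2.1; let s := a.2.2.2
        let t := u ^^^ v ^^^ w
        (((u ^^^ v ^^^ w : ℕ) : ℤ) ≡ -(u : ℤ) + (v : ℤ) + (w : ℤ) [ZMOD (2 ^ n : ℕ)]) ∧
        (((w ^^^ s ^^^ t : ℕ) : ℤ) ≡ -(w : ℤ) + (s : ℤ) + (t : ℤ) [ZMOD (2 ^ n : ℕ)]))).card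
    N = 16 * 10 ^ (n - 1) ∧ (N : ℚ) / (16 : ℚ) ^ n = ((5 : ℚ) / 8) ^ (n - 1) := by
  obtain ⟨m, rfl⟩ := Nat.exists_eq_add_of_le' hn
  intro N
  have hN : N = 16 * 10 ^ m := by
    calc N = #{a ∈ range (2 ^ (m + 1)) ×ˢ range (2 ^ (m + 1)) ×ˢ range (2 ^ (m + 1)) ×ˢ
          range (2 ^ (m + 1)) | ∀ i < m + 1, i < m → QuadNegAddAddBit (quadBits a i)} := by
          refine congrArg card (filter_congr fun ⟨u, v, w, s⟩ _ => ?_)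
          exact (quad_modEq_neg_add_add_iff m u v w s).trans
            ⟨fun h i _ hi => h i hi, fun h i hi => h i (by omega) hi⟩
      _ = ∏ i ∈ range (m + 1), #{b | i < m → QuadNegAddAddBit b} :=
          card_filter_quadBits (m + 1) fun i b => i < m → QuadNegAddAddBit b
      _ = 16 * 10 ^ m := by
          rw [prod_range_succ, prod_congr rfl (g := fun _ => 10) fun i hi => by
            simp only [mem_range.1 hi, true_imp_iff, card_quadNegAddAddBit]]
          simp [mul_comm]
  refine ⟨by simpa using hN, ?_⟩
  rw [hN, Nat.add_sub_cancel, pow_succ, show (5 / 8 : ℚ) = 10 / 16 by norm_num, div_pow]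
  push_cast
  field_simp
end
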